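/- arXiv:1905.07223 — 2 statements merged into one kernel-verified Lean document; each statement's English description precedes it below -/
import Mathlib

section
/- k-abelian equivalence is a congruence on the free monoid: if u is k-abelian equivalent to u' and v is k-abelian equivalent to v', then uv is k-abelian equivalent to u'v'. -/
/-- `npow w n` is the word `w` repeated `n` times. -/
def npow {α : Type*} (w : List α) : ℕ → List α
  | 0 => []
  | n + 1 => w ++ npow w n

/-- `occ w x` is the number of occurrences of `x` as a factor of `w`,
i.e. the number of factorizations `w = s ++ x ++ t`. -/
def occ {α : Type*} [DecidableEq α] (w x : List α) : ℕ :=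
  ((List.range (w.length + 1)).filter (fun i => x <+: w.drop i)).length

/-- A nonempty word is primitive if it is not a power of a shorter word. -/
def Primitive {α : Type*} (p : List α) : Prop :=
  p ≠ [] ∧ ∀ (q : List α) (n : ℕ), p = npow q n → q = p

/-- `u` and `v` are `k`-abelian equivalent. -/
def KAbEq {α : Type*} [DecidableEq α] (k : ℕ) (u v : List α) : Prop :=
  ∀ x : List α, x.length ≤ k → occ u x = occ v x

theorem occ_nil {α : Type*} [DecidableEq α] (x : List α) :
    occ ([] : List α) x = if x = [] then 1 else 0 := by
  simp [occ, List.range_succ]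
  split <;> simp_all

theorem occ_nil_right {α : Type*} [DecidableEq α] (w : List α) :
    occ w ([] : List α) = w.length + 1 := by
  simp [occ]

theorem occ_cons {α : Type*} [DecidableEq α] (a : α) (w x : List α) :
    occ (a :: w) x = (if x <+: a :: w then 1 else 0) + occ w x := by
  unfold occ
  rw [show (a :: w).length + 1 = (w.length + 1) + 1 by simp,
    List.range_succ_eq_map, List.filter_cons, List.filter_map]
  have : (fun i => decide (x <+: List.drop i (a :: w))) ∘ Nat.succ
      = fun i => decide (x <+: List.drop i w) := by
    funext i; rfl
  rw [this]
  simp only [List.drop_zero]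
  split <;> simp_all [Nat.add_comm]

theorem occ_eq_zero {α : Type*} [DecidableEq α] {w x : List α} (h : w.length < x.length) :
    occ w x = 0 := by
  simp only [occ, List.length_eq_zero_iff, List.filter_eq_nil_iff]
  intro i hi hp
  simp only [decide_eq_true_eq] at hp
  have := hp.length_le
  simp at this
  omega

theorem occ_sum {α : Type*} [DecidableEq α] (w p : List α) (S : Finset α)
    (hS : ∀ a ∈ w, a ∈ S) :
    occ w p = (if p <+: w then 1 else 0) + ∑ a ∈ S, occ w (a :: p) := by
  induction w with
  | nil =>
    simp [occ_nil, List.prefix_nil]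
  | cons b w ih =>
    have hb : b ∈ S := hS b (by simp)
    have hS' : ∀ a ∈ w, a ∈ S := fun a ha => hS a (by simp [ha])
    rw [occ_cons, ih hS']
    have key : ∑ a ∈ S, occ (b :: w) (a :: p)
        = (if p <+: w then 1 else 0) + ∑ a ∈ S, occ w (a :: p) := by
      have h1 : ∀ a ∈ S, occ (b :: w) (a :: p)
          = (if a = b ∧ p <+: w then 1 else 0) + occ w (a :: p) := by
        intro a _
        rw [occ_cons]
        congr 1
        simp [List.cons_prefix_cons, eq_comm]
      rw [Finset.sum_congr rfl h1, Finset.sum_add_distrib]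
      congr 1
      by_cases hp : p <+: w
      · simp [hp, hb]
      · simp [hp]
    omega

theorem KAbEq.length_eq {α : Type*} [DecidableEq α] {k : ℕ} {u u' : List α}
    (h : KAbEq k u u') : u.length = u'.length := by
  have := h [] (by simp)
  rw [occ_nil_right, occ_nil_right] at this
  omega

theorem KAbEq.prefix_iff {α : Type*} [DecidableEq α] {k : ℕ} {u u' p : List α}
    (h : KAbEq k u u') (hp : p.length + 1 ≤ k) : p <+: u ↔ p <+: u' := by
  set S := (u ++ u').toFinset with hSdef
  have h1 := occ_sum u p S (by intro a ha; simp [hSdef, ha])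
  have h2 := occ_sum u' p S (by intro a ha; simp [hSdef, ha])
  have e0 : occ u p = occ u' p := h p (by omega)
  have e1 : ∀ a ∈ S, occ u (a :: p) = occ u' (a :: p) := by
    intro a _; exact h (a :: p) (by simp; omega)
  rw [Finset.sum_congr rfl e1] at h1
  rw [h1, h2] at e0
  by_cases c1 : p <+: u <;> by_cases c2 : p <+: u' <;> simp_all

theorem KAbEq.take_eq {α : Type*} [DecidableEq α] {k : ℕ} {u u' : List α}
    (h : KAbEq k u u') {m : ℕ} (hm : m + 1 ≤ k) : u.take m = u'.take m := by
  have h1 : u.take m <+: u' := (h.prefix_iff (by simp; omega)).1 (List.take_prefix m u)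
  have h2 : u'.take m <+: u' := List.take_prefix m u'
  have hl : (u.take m).length = (u'.take m).length := by
    simp [h.length_eq]
  exact (List.prefix_of_prefix_length_le h1 h2 hl.le).eq_of_length hl

theorem prefix_append_of_le {α : Type*} {x l₁ l₂ : List α} (h : x <+: l₁ ++ l₂)
    (hl : x.length ≤ l₁.length) : x <+: l₁ := by
  have hx : x = (l₁ ++ l₂).take x.length := List.prefix_iff_eq_take.mp h
  rw [List.take_append_of_le_length hl] at hx
  rw [hx]
  exact List.take_prefix _ _

theorem occ_snoc {α : Type*} [DecidableEq α] (a : α) (w x : List α) :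
    occ (w ++ [a]) x = occ w x + (if x <:+ w ++ [a] then 1 else 0) := by
  induction w with
  | nil =>
    rw [show ([] : List α) ++ [a] = a :: [] from rfl, occ_cons, occ_nil]
    have h1 : x <+: [a] ↔ x = [] ∨ x = [a] := by
      constructor
      · intro h
        rcases List.eq_nil_or_concat x with h0 | ⟨y, b, rfl⟩
        · left; exact h0
        · right; exact h.eq_of_length_le (by have := h.length_le; simpa using this)
      · rintro (rfl | rfl) <;> simp
    have h2 : x <:+ [a] ↔ x = [] ∨ x = [a] := by
      constructor
      · intro h
        rcases List.eq_nil_or_concat x with h0 | ⟨y, b, rfl⟩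
        · left; exact h0
        · right; exact h.eq_of_length_le (by have := h.length_le; simpa using this)
      · rintro (rfl | rfl) <;> simp
    by_cases hx : x = [] <;> simp_all
  | cons b w ih =>
    rw [show (b :: w) ++ [a] = b :: (w ++ [a]) from rfl, occ_cons, ih, occ_cons]
    have key : (if x <+: b :: (w ++ [a]) then 1 else 0) + (if x <:+ w ++ [a] then 1 else 0)
        = (if x <+: b :: w then 1 else 0) + (if x <:+ b :: (w ++ [a]) then 1 else 0) := by
      by_cases hx : x = b :: (w ++ [a])
      · subst hx
        have n1 : ¬ (b :: (w ++ [a]) <:+ w ++ [a]) := by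
          intro h; have := h.length_le; simp at this
        have n2 : ¬ (b :: (w ++ [a]) <+: b :: w) := by
          intro h; have := h.length_le; simp at this
        simp [n1, n2]
      · have e1 : x <+: b :: (w ++ [a]) ↔ x <+: b :: w := by
          constructor
          · intro h
            apply prefix_append_of_le (l₂ := [a]) (by simpa using h)
            have h2 := h.length_le
            simp at h2
            rcases Nat.lt_or_ge x.length (w.length + 2) with hlt | hge
            · simpa using Nat.lt_succ_iff.mp hlt
            · exfalso; exact hx (h.eq_of_length_le (by simp; omega))
          · intro h; exact h.trans (by simp)
        have e2 : x <:+ b :: (w ++ [a]) ↔ x <:+ w ++ [a] := by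
          rw [List.suffix_cons_iff]
          simp [hx]
        simp only [e1, e2]
    omega

theorem occ_reverse {α : Type*} [DecidableEq α] (w x : List α) :
    occ w.reverse x.reverse = occ w x := by
  induction w with
  | nil => simp [occ_nil]
  | cons a w ih =>
    rw [occ_cons, List.reverse_cons, occ_snoc, ih, ← List.reverse_cons]
    have : x.reverse <:+ (a :: w).reverse ↔ x <+: a :: w := by
      rw [List.reverse_suffix]
    simp only [this]
    omega

theorem KAbEq.rev {α : Type*} [DecidableEq α] {k : ℕ} {u u' : List α}
    (h : KAbEq k u u') : KAbEq k u.reverse u'.reverse := by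
  intro x hx
  have h1 := occ_reverse u x.reverse
  have h2 := occ_reverse u' x.reverse
  rw [List.reverse_reverse] at h1 h2
  rw [h1, h2]
  exact h x.reverse (by simpa using hx)

theorem KAbEq.rtake_eq {α : Type*} [DecidableEq α] {k : ℕ} {u u' : List α}
    (h : KAbEq k u u') {m : ℕ} (hm : m + 1 ≤ k) :
    u.drop (u.length - m) = u'.drop (u'.length - m) := by
  have e := h.rev.take_eq hm
  have e1 : u.drop (u.length - m) = (u.reverse.take m).reverse :=
    List.rtake_eq_reverse_take_reverse u m
  have e2 : u'.drop (u'.length - m) = (u'.reverse.take m).reverse :=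
    List.rtake_eq_reverse_take_reverse u' m
  rw [e1, e2, e]

theorem occ_append_left {α : Type*} [DecidableEq α] (u v x : List α) (hx : x ≠ []) :
    occ (u ++ v) x = occ u x + occ (u.drop (u.length - (x.length - 1)) ++ v) x := by
  have hxl : 1 ≤ x.length := List.length_pos_iff.mpr hx
  induction u with
  | nil => simp [occ_nil, hx]
  | cons a u ih =>
    by_cases hlen : u.length < x.length - 1
    · have h0 : (a :: u).length - (x.length - 1) = 0 := by simp; omega
      rw [h0, List.drop_zero]
      have hz : occ (a :: u) x = 0 := occ_eq_zero (by simp; omega)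
      omega
    · push_neg at hlen
      have h1 : (a :: u).length - (x.length - 1) = (u.length - (x.length - 1)) + 1 := by
        simp; omega
      rw [h1, List.drop_succ_cons, show (a :: u) ++ v = a :: (u ++ v) from rfl,
        occ_cons, occ_cons, ih]
      have e1 : x <+: a :: (u ++ v) ↔ x <+: a :: u := by
        constructor
        · intro h
          exact prefix_append_of_le (l₁ := a :: u) (l₂ := v) (by simpa using h)
            (by simp; omega)
        · intro h; exact h.trans (by simp)
      simp only [e1]
      omega

theorem occ_append_right {α : Type*} [DecidableEq α] (w v x : List α) (hx : x ≠ []) :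
    occ (w ++ v) x = occ v x + occ (w ++ v.take (x.length - 1)) x := by
  have h1 : occ (w ++ v) x = occ ((w ++ v).reverse) x.reverse := by
    rw [← occ_reverse]
  rw [h1, List.reverse_append,
    occ_append_left v.reverse w.reverse x.reverse (by simpa using hx)]
  have e0 : v.reverse.length - (x.reverse.length - 1) = v.length - (x.length - 1) := by simp
  have e1 : v.reverse.drop (v.length - (x.length - 1)) = (v.take (x.length - 1)).reverse := by
    have ht : v.take (x.length - 1) = v.rdrop (v.length - (x.length - 1)) := by
      rw [List.rdrop, List.take_eq_take_iff]
      omega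
    rw [ht, List.rdrop_eq_reverse_drop_reverse, List.reverse_reverse]
  rw [e0, e1, ← List.reverse_append, occ_reverse, occ_reverse]


/-- `X` is a separating set of factors of `L`. -/
def IsSSF {α : Type*} [DecidableEq α] (X L : Set (List α)) : Prop :=
  ∀ u ∈ L, ∀ v ∈ L, u ≠ v → ∃ x ∈ X, occ u x ≠ occ v x

/-- `L` has a finite separating set of factors. -/
def HasFiniteSSF {α : Type*} [DecidableEq α] (L : Set (List α)) : Prop :=
  ∃ X : Set (List α), X.Finite ∧ IsSSF X L

/-- `k`-abelian equivalence is a congruence with respect to concatenation. -/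
theorem stmt6 {α : Type*} [DecidableEq α] (k : ℕ) (u u' v v' : List α)
    (hu : KAbEq k u u') (hv : KAbEq k v v') :
    KAbEq k (u ++ v) (u' ++ v') := by
  intro x hxk
  by_cases hx : x = []
  · subst hx
    rw [occ_nil_right, occ_nil_right]
    simp [hu.length_eq, hv.length_eq]
  · have hxl : 1 ≤ x.length := List.length_pos_iff.mpr hx
    rw [occ_append_left u v x hx, occ_append_right _ v x hx,
      occ_append_left u' v' x hx, occ_append_right _ v' x hx]
    have hm : (x.length - 1) + 1 ≤ k := by omega
    rw [hu x hxk, hv x hxk, hu.rtake_eq hm, hv.take_eq hm]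
end

section
/- If languages K and L have finite symmetric difference, then K has a finite SSF if and only if L has a finite SSF. -/
/-!
Adding finitely many words `F` to a language with finite SSF `X` keeps a finite SSF:
`X ∪ {[]} ∪ F` works, since `[]` counts length + 1 and so separates words of different lengths,
while a word of `F` occurs exactly once in itself and never in another word of the same length.
-/

section

variable {α : Type*} [DecidableEq α]

lemma occ_nil_s14 (w : List α) : occ w [] = w.length + 1 := by
  simp [occ]

lemma occ_of_length_le {w x : List α} (h : w.length ≤ x.length) :
    occ w x = if x = w then 1 else 0 := by
  have no_later : ∀ i ∈ List.range w.length, ¬ x <+: w.drop (i + 1) := fun i hi hpre => by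
    have := hpre.length_le
    simp only [List.length_drop, List.mem_range] at this hi
    omega
  have prefix_iff : x <+: w ↔ x = w :=
    ⟨fun hpre => hpre.eq_of_length (le_antisymm hpre.length_le h),
      fun hxw => hxw ▸ List.prefix_refl x⟩
  rw [occ, List.range_succ_eq_map, List.filter_cons,
    List.filter_eq_nil_iff.mpr (by simpa using no_later)]
  by_cases hxw : x = w <;> simp [prefix_iff, hxw]

lemma occ_self (w : List α) : occ w w = 1 := by
  simp [occ_of_length_le le_rfl]

lemma occ_eq_zero_of_length_le {w x : List α} (h : w.length ≤ x.length) (hne : x ≠ w) :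
    occ w x = 0 := by
  simp [occ_of_length_le h, hne]

lemma IsSSF.mono {X L L' : Set (List α)} (hX : IsSSF X L) (hL : L' ⊆ L) : IsSSF X L' :=
  fun u hu v hv huv => hX u (hL hu) v (hL hv) huv

lemma IsSSF.union {X L : Set (List α)} (hX : IsSSF X L) (F : Set (List α)) :
    IsSSF (X ∪ insert [] F) (L ∪ F) := by
  have separate_self : ∀ u v : List α, u ≠ v → u.length = v.length → occ u u ≠ occ v u :=
    fun u v huv hlen => by simp [occ_self, occ_eq_zero_of_length_le hlen.ge huv]
  intro u hu v hv huv
  by_cases hlen : u.length = v.length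
  · rcases hu with hu | hu
    · rcases hv with hv | hv
      · obtain ⟨x, hx, hne⟩ := hX u hu v hv huv
        exact ⟨x, .inl hx, hne⟩
      · exact ⟨v, .inr (.inr hv), (separate_self v u (Ne.symm huv) hlen.symm).symm⟩
    · exact ⟨u, .inr (.inr hu), separate_self u v huv hlen⟩
  · exact ⟨[], .inr (.inl rfl), by simpa [occ_nil_s14] using hlen⟩

lemma HasFiniteSSF.mono {K L : Set (List α)} (hK : HasFiniteSSF K) (hL : L ⊆ K) :
    HasFiniteSSF L :=
  let ⟨X, hXfin, hX⟩ := hK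
  ⟨X, hXfin, hX.mono hL⟩

lemma HasFiniteSSF.union_of_finite {L F : Set (List α)} (hL : HasFiniteSSF L) (hF : F.Finite) :
    HasFiniteSSF (L ∪ F) :=
  let ⟨X, hXfin, hX⟩ := hL
  ⟨X ∪ insert [] F, hXfin.union (hF.insert []), hX.union F⟩

lemma HasFiniteSSF.of_diff_finite {K L : Set (List α)} (hK : HasFiniteSSF K)
    (hLK : (L \ K).Finite) : HasFiniteSSF L :=
  (hK.union_of_finite hLK).mono (Set.sdiff_subset_iff.mp subset_rfl)

end

theorem stmt14_general {α : Type*} [DecidableEq α] (K L : Set (List α))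
    (h : ((K \ L) ∪ (L \ K)).Finite) :
    HasFiniteSSF K ↔ HasFiniteSSF L :=
  ⟨fun hK => hK.of_diff_finite (h.subset Set.subset_union_right),
    fun hL => hL.of_diff_finite (h.subset Set.subset_union_left)⟩

/-- If `K` and `L` have finite symmetric difference, then `K` has a finite SSF
iff `L` does. -/
theorem stmt14 {α : Type*} [DecidableEq α] [Fintype α] (K L : Set (List α))
    (h : ((K \ L) ∪ (L \ K)).Finite) :
    HasFiniteSSF K ↔ HasFiniteSSF L :=
  stmt14_general K L h
end
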